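/- In a Cartesian k-differential category, if p : A → B is a D-polynomial, then D[p] : A × A → B is a D-polynomial with deg(D[p]) = deg(p). -/

import Mathlib

/-! A self-contained formalization of (Cartesian) `k`-differential categories. -/

universe u v w

/-- A Cartesian left `k`-linear category equipped with a differential combinator
satisfying the axioms **[CD.1]**–**[CD.7]**: a Cartesian `k`-differential category.
Composition `comp f g` is in diagrammatic order (`g ∘ f`). -/
structure CDC (k : Type w) [CommSemiring k] where
  Obj : Type u
  Hom : Obj → Obj → Type v
  idm : ∀ A : Obj, Hom A A
  comp : ∀ {A B C : Obj}, Hom A B → Hom B C → Hom A C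
  id_comp : ∀ {A B : Obj} (f : Hom A B), comp (idm A) f = f
  comp_id : ∀ {A B : Obj} (f : Hom A B), comp f (idm B) = f
  assoc : ∀ {A B C D : Obj} (f : Hom A B) (g : Hom B C) (h : Hom C D),
    comp (comp f g) h = comp f (comp g h)
  -- each homset is a `k`-module
  add : ∀ {A B : Obj}, Hom A B → Hom A B → Hom A B
  zero : ∀ {A B : Obj}, Hom A B
  smul : ∀ {A B : Obj}, k → Hom A B → Hom A B
  add_assoc : ∀ {A B : Obj} (f g h : Hom A B), add (add f g) h = add f (add g h)
  add_comm : ∀ {A B : Obj} (f g : Hom A B), add f g = add g f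
  zero_add : ∀ {A B : Obj} (f : Hom A B), add zero f = f
  one_smul : ∀ {A B : Obj} (f : Hom A B), smul 1 f = f
  mul_smul : ∀ {A B : Obj} (r s : k) (f : Hom A B), smul (r * s) f = smul r (smul s f)
  smul_add : ∀ {A B : Obj} (r : k) (f g : Hom A B), smul r (add f g) = add (smul r f) (smul r g)
  add_smul : ∀ {A B : Obj} (r s : k) (f : Hom A B), smul (r + s) f = add (smul r f) (smul s f)
  zero_smul : ∀ {A B : Obj} (f : Hom A B), smul 0 f = zero
  smul_zero : ∀ {A B : Obj} (r : k), smul r (zero (A := A) (B := B)) = zero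
  -- pre-composition is `k`-linear
  comp_add : ∀ {A B C : Obj} (x : Hom A B) (f g : Hom B C),
    comp x (add f g) = add (comp x f) (comp x g)
  comp_smul : ∀ {A B C : Obj} (x : Hom A B) (r : k) (f : Hom B C),
    comp x (smul r f) = smul r (comp x f)
  comp_zero : ∀ {A B C : Obj} (x : Hom A B), comp x (zero (A := B) (B := C)) = zero
  -- finite products
  prod : Obj → Obj → Obj
  fst : ∀ {A B : Obj}, Hom (prod A B) A
  snd : ∀ {A B : Obj}, Hom (prod A B) B
  lift : ∀ {C A B : Obj}, Hom C A → Hom C B → Hom C (prod A B)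
  lift_fst : ∀ {C A B : Obj} (f : Hom C A) (g : Hom C B), comp (lift f g) fst = f
  lift_snd : ∀ {C A B : Obj} (f : Hom C A) (g : Hom C B), comp (lift f g) snd = g
  lift_unique : ∀ {C A B : Obj} (h : Hom C (prod A B)), lift (comp h fst) (comp h snd) = h
  -- projections are `k`-linear
  fst_add : ∀ {C A B : Obj} (f g : Hom C (prod A B)),
    comp (add f g) fst = add (comp f fst) (comp g fst)
  fst_smul : ∀ {C A B : Obj} (r : k) (f : Hom C (prod A B)),
    comp (smul r f) fst = smul r (comp f fst)
  snd_add : ∀ {C A B : Obj} (f g : Hom C (prod A B)),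
    comp (add f g) snd = add (comp f snd) (comp g snd)
  snd_smul : ∀ {C A B : Obj} (r : k) (f : Hom C (prod A B)),
    comp (smul r f) snd = smul r (comp f snd)
  -- the differential combinator
  D : ∀ {A B : Obj}, Hom A B → Hom (prod A A) B
  CD1 : ∀ {A B : Obj} (r s : k) (f g : Hom A B),
    D (add (smul r f) (smul s g)) = add (smul r (D f)) (smul s (D g))
  CD2 : ∀ {A B C : Obj} (f : Hom A B) (r s : k) (a b c : Hom C A),
    comp (lift a (add (smul r b) (smul s c))) (D f)
      = add (smul r (comp (lift a b) (D f))) (smul s (comp (lift a c) (D f)))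
  CD3id : ∀ {A : Obj}, D (idm A) = snd
  CD3fst : ∀ {A B : Obj}, D (fst (A := A) (B := B)) = comp snd fst
  CD3snd : ∀ {A B : Obj}, D (snd (A := A) (B := B)) = comp snd snd
  CD4 : ∀ {A B C : Obj} (f : Hom A B) (g : Hom A C), D (lift f g) = lift (D f) (D g)
  CD5 : ∀ {A B C : Obj} (f : Hom A B) (g : Hom B C),
    D (comp f g) = comp (lift (comp fst f) (D f)) (D g)
  CD6 : ∀ {A B C : Obj} (f : Hom A B) (a b : Hom C A),
    comp (lift (lift a zero) (lift zero b)) (D (D f)) = comp (lift a b) (D f)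
  CD7 : ∀ {A B C : Obj} (f : Hom A B) (a b c d : Hom C A),
    comp (lift (lift a b) (lift c d)) (D (D f))
      = comp (lift (lift a c) (lift b d)) (D (D f))

namespace CDC

variable {k : Type w} [CommSemiring k]

/-- `pow A n` is the product `A × A^{×ⁿ}` (so `pow A 0 = A`), the domain of the
`n`-th derivative `∂⁽ⁿ⁾[f] : A × A^{×ⁿ} → B`. -/
def pow (X : CDC k) (A : X.Obj) : ℕ → X.Obj
  | 0 => A
  | n + 1 => X.prod (X.pow A n) A

/-- `pad A n : A → A × A^{×ⁿ}` is `a ↦ (a, 0, …, 0)`. -/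
def pad (X : CDC k) (A : X.Obj) : (n : ℕ) → X.Hom A (X.pow A n)
  | 0 => X.idm A
  | n + 1 => X.lift (X.pad A n) X.zero

/-- The `n`-th derivative `∂⁽ⁿ⁾[f] : A × A^{×ⁿ} → B`, defined inductively by
`∂⁽⁰⁾[f] = f` and `∂⁽ⁿ⁺¹⁾[f]` is the partial derivative of `∂⁽ⁿ⁾[f]` in its first
argument (obtained by padding the direction vector with zeroes). -/
def pd (X : CDC k) {A B : X.Obj} : (n : ℕ) → X.Hom A B → X.Hom (X.pow A n) B
  | 0, f => f
  | n + 1, f =>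
      X.comp (X.lift X.fst (X.comp X.snd (X.pad A n))) (X.D (X.pd n f))

/-- `diag A n : A → A × A^{×ⁿ}` is `x ↦ (0, x, …, x)`. -/
def diag (X : CDC k) (A : X.Obj) : (n : ℕ) → X.Hom A (X.pow A n)
  | 0 => X.zero
  | n + 1 => X.lift (X.diag A n) (X.idm A)

/-- A map `p` is a `D`-polynomial if `∂⁽ⁿ⁺¹⁾[p] = 0` for some `n`. -/
def IsPoly (X : CDC k) {A B : X.Obj} (p : X.Hom A B) : Prop :=
  ∃ n : ℕ, X.pd (n + 1) p = X.zero

/-- The `D`-degree of `p`: the least `n` with `∂⁽ⁿ⁺¹⁾[p] = 0`. -/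
noncomputable def deg (X : CDC k) {A B : X.Obj} (p : X.Hom A B) : ℕ :=
  sInf {n : ℕ | X.pd (n + 1) p = X.zero}

end CDC

/-- A Cartesian `k`-differential category over a commutative `ℚ≥0`-algebra `k`,
i.e. where every `n! ∈ k` is invertible. -/
structure QCDC (k : Type w) [CommSemiring k] extends CDC k where
  invFact : ℕ → k
  invFact_spec : ∀ n : ℕ, (Nat.factorial n : k) * invFact n = 1

namespace QCDC

variable {k : Type w} [CommSemiring k]

/-- The `n`-th Taylor differential monomial `M⁽ⁿ⁾[f](x) = (1/n!) · ∂⁽ⁿ⁾[f](0, x, …, x)`. -/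
def M (X : QCDC k) {A B : X.Obj} (n : ℕ) (f : X.Hom A B) : X.Hom A B :=
  X.smul (X.invFact n) (X.comp (X.toCDC.diag A n) (X.toCDC.pd n f))

/-- The `n`-th Taylor differential polynomial `T⁽ⁿ⁾[f] = Σ_{j=0}^n M⁽ʲ⁾[f]`. -/
def T (X : QCDC k) {A B : X.Obj} : ℕ → X.Hom A B → X.Hom A B
  | 0, f => X.M 0 f
  | n + 1, f => X.add (X.T n f) (X.M (n + 1) f)

/-- The `D`-distance: `2^(-n)` for the least `n` where the Taylor monomials of `f` and `g`
disagree, and `0` if they all agree. -/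
noncomputable def dD (X : QCDC k) {A B : X.Obj} (f g : X.Hom A B) : ℝ :=
  open Classical in
  if ∀ n : ℕ, X.M n f = X.M n g then 0
  else (2 : ℝ) ^ (-((sInf {n : ℕ | ¬ X.M n f = X.M n g} : ℕ) : ℤ))

/-- A Cartesian `k`-differential category is **Taylor** if maps are completely determined
by their Taylor differential monomials. -/
def Taylor (X : QCDC k) : Prop :=
  ∀ (A B : X.Obj) (f g : X.Hom A B), (∀ n : ℕ, X.M n f = X.M n g) → f = g

end QCDC


namespace CDC

variable {k : Type w} [CommSemiring k]

/-! ### Basic product / linearity calculus -/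

lemma comp_lift' (X : CDC k) {C A B D' : X.Obj} (x : X.Hom C A) (f : X.Hom A B)
    (g : X.Hom A D') :
    X.comp x (X.lift f g) = X.lift (X.comp x f) (X.comp x g) := by
  have h := X.lift_unique (X.comp x (X.lift f g))
  rw [X.assoc, X.assoc, X.lift_fst, X.lift_snd] at h
  exact h.symm

lemma comp_comp_lift (X : CDC k) {C A B D' E : X.Obj} (x : X.Hom C A) (f : X.Hom A B)
    (g : X.Hom A D') (h : X.Hom (X.prod B D') E) :
    X.comp x (X.comp (X.lift f g) h) = X.comp (X.lift (X.comp x f) (X.comp x g)) h := by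
  rw [← X.assoc, X.comp_lift']

lemma lift_fst_snd (X : CDC k) {A B : X.Obj} :
    X.lift (X.fst (A := A) (B := B)) X.snd = X.idm _ := by
  have h := X.lift_unique (X.idm (X.prod A B))
  rwa [X.id_comp, X.id_comp] at h

lemma lift_fst_assoc (X : CDC k) {C A B D' : X.Obj} (f : X.Hom C A) (g : X.Hom C B)
    (h : X.Hom A D') :
    X.comp (X.lift f g) (X.comp X.fst h) = X.comp f h := by
  rw [← X.assoc, X.lift_fst]

lemma lift_snd_assoc (X : CDC k) {C A B D' : X.Obj} (f : X.Hom C A) (g : X.Hom C B)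
    (h : X.Hom B D') :
    X.comp (X.lift f g) (X.comp X.snd h) = X.comp g h := by
  rw [← X.assoc, X.lift_snd]

lemma zero_comp_fst (X : CDC k) {C A B : X.Obj} :
    X.comp (X.zero (A := C) (B := X.prod A B)) X.fst = X.zero := by
  rw [← X.zero_smul (X.zero (A := C) (B := X.prod A B)), X.fst_smul, X.zero_smul]

lemma zero_comp_snd (X : CDC k) {C A B : X.Obj} :
    X.comp (X.zero (A := C) (B := X.prod A B)) X.snd = X.zero := by
  rw [← X.zero_smul (X.zero (A := C) (B := X.prod A B)), X.snd_smul, X.zero_smul]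

lemma lift_zero_zero (X : CDC k) {C A B : X.Obj} :
    X.lift (X.zero (A := C) (B := A)) (X.zero (A := C) (B := B)) = X.zero := by
  have h := X.lift_unique (X.zero (A := C) (B := X.prod A B))
  rwa [X.zero_comp_fst, X.zero_comp_snd] at h

lemma D_zero (X : CDC k) {A B : X.Obj} : X.D (X.zero (A := A) (B := B)) = X.zero := by
  have h : (X.zero : X.Hom A B)
      = X.add (X.smul 0 X.zero) (X.smul 0 (X.zero : X.Hom A B)) := by
    rw [X.zero_smul, X.zero_add]
  calc X.D (X.zero : X.Hom A B)
      = X.D (X.add (X.smul 0 X.zero) (X.smul 0 (X.zero : X.Hom A B))) := by rw [← h]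
    _ = X.add (X.smul 0 (X.D X.zero)) (X.smul 0 (X.D (X.zero : X.Hom A B))) := X.CD1 0 0 _ _
    _ = X.zero := by rw [X.zero_smul, X.zero_add]

/-- Linear maps: `D f = snd ; f`. -/
def Lin (X : CDC k) {A B : X.Obj} (f : X.Hom A B) : Prop := X.D f = X.comp X.snd f

lemma lin_id (X : CDC k) {A : X.Obj} : X.Lin (X.idm A) := by
  rw [Lin, X.CD3id, X.comp_id]

lemma lin_fst (X : CDC k) {A B : X.Obj} : X.Lin (X.fst (A := A) (B := B)) := X.CD3fst

lemma lin_snd (X : CDC k) {A B : X.Obj} : X.Lin (X.snd (A := A) (B := B)) := X.CD3snd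

lemma lin_zero (X : CDC k) {A B : X.Obj} : X.Lin (X.zero (A := A) (B := B)) := by
  rw [Lin, X.D_zero, X.comp_zero]

lemma lin_lift (X : CDC k) {C A B : X.Obj} {f : X.Hom C A} {g : X.Hom C B}
    (hf : X.Lin f) (hg : X.Lin g) : X.Lin (X.lift f g) := by
  rw [Lin, X.CD4, hf, hg, X.comp_lift']

lemma lin_comp (X : CDC k) {A B C : X.Obj} {f : X.Hom A B} {g : X.Hom B C}
    (hf : X.Lin f) (hg : X.Lin g) : X.Lin (X.comp f g) := by
  rw [Lin, X.CD5, hf, hg, X.lift_snd_assoc, X.assoc]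

lemma lin_pad (X : CDC k) {A : X.Obj} : ∀ n : ℕ, X.Lin (X.pad A n)
  | 0 => X.lin_id
  | n + 1 => X.lin_lift (X.lin_pad n) X.lin_zero

lemma zero_comp_pad (X : CDC k) {C A : X.Obj} : ∀ n : ℕ,
    X.comp (X.zero (A := C) (B := A)) (X.pad A n) = X.zero
  | 0 => X.comp_id _
  | n + 1 => by
      show X.comp X.zero (X.lift (X.pad A n) X.zero) = X.zero
      rw [X.comp_lift', X.zero_comp_pad n, X.comp_zero, X.lift_zero_zero]

/-! ### Zipping and unzipping `(A × A)^{×n} ≅ A^{×n} × A^{×n}` -/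

def unzip (X : CDC k) (A : X.Obj) :
    (n : ℕ) → X.Hom (X.pow (X.prod A A) n) (X.prod (X.pow A n) (X.pow A n))
  | 0 => X.idm _
  | n + 1 =>
      X.lift (X.lift (X.comp X.fst (X.comp (X.unzip A n) X.fst)) (X.comp X.snd X.fst))
             (X.lift (X.comp X.fst (X.comp (X.unzip A n) X.snd)) (X.comp X.snd X.snd))

def zip (X : CDC k) (A : X.Obj) :
    (n : ℕ) → X.Hom (X.prod (X.pow A n) (X.pow A n)) (X.pow (X.prod A A) n)
  | 0 => X.idm _
  | n + 1 =>
      X.lift (X.comp (X.lift (X.comp X.fst X.fst) (X.comp X.snd X.fst)) (X.zip A n))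
             (X.lift (X.comp X.fst X.snd) (X.comp X.snd X.snd))

lemma lin_unzip (X : CDC k) {A : X.Obj} : ∀ n : ℕ, X.Lin (X.unzip A n)
  | 0 => X.lin_id
  | n + 1 =>
      X.lin_lift
        (X.lin_lift (X.lin_comp X.lin_fst (X.lin_comp (X.lin_unzip n) X.lin_fst))
          (X.lin_comp X.lin_snd X.lin_fst))
        (X.lin_lift (X.lin_comp X.lin_fst (X.lin_comp (X.lin_unzip n) X.lin_snd))
          (X.lin_comp X.lin_snd X.lin_snd))


lemma zip_unzip (X : CDC k) {A : X.Obj} : ∀ n : ℕ,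
    X.comp (X.zip A n) (X.unzip A n) = X.idm _
  | 0 => X.id_comp _
  | n + 1 => by
      have ih : ∀ {D : X.Obj} (h : X.Hom (X.prod (X.pow A n) (X.pow A n)) D),
          X.comp (X.zip A n) (X.comp (X.unzip A n) h) = h := by
        intro D h
        rw [← X.assoc, X.zip_unzip n, X.id_comp]
      show X.comp (X.lift (X.comp (X.lift (X.comp X.fst X.fst) (X.comp X.snd X.fst)) (X.zip A n))
             (X.lift (X.comp X.fst X.snd) (X.comp X.snd X.snd)))
        (X.lift (X.lift (X.comp X.fst (X.comp (X.unzip A n) X.fst)) (X.comp X.snd X.fst))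
               (X.lift (X.comp X.fst (X.comp (X.unzip A n) X.snd)) (X.comp X.snd X.snd)))
        = X.idm _
      simp only [comp_lift', assoc, lift_fst_assoc, lift_snd_assoc, lift_fst, lift_snd, ih]
      simp only [lift_unique, lift_fst_snd]

lemma pad_unzip (X : CDC k) {A : X.Obj} : ∀ n : ℕ,
    X.comp (X.pad (X.prod A A) n) (X.unzip A n)
      = X.lift (X.comp X.fst (X.pad A n)) (X.comp X.snd (X.pad A n))
  | 0 => by
      show X.comp (X.idm _) (X.idm _)
        = X.lift (X.comp X.fst (X.idm A)) (X.comp X.snd (X.idm A))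
      rw [X.id_comp, X.comp_id, X.comp_id, X.lift_fst_snd]
  | n + 1 => by
      show X.comp (X.lift (X.pad (X.prod A A) n) X.zero)
        (X.lift (X.lift (X.comp X.fst (X.comp (X.unzip A n) X.fst)) (X.comp X.snd X.fst))
               (X.lift (X.comp X.fst (X.comp (X.unzip A n) X.snd)) (X.comp X.snd X.snd)))
        = X.lift (X.comp X.fst (X.lift (X.pad A n) X.zero))
                 (X.comp X.snd (X.lift (X.pad A n) X.zero))
      rw [X.comp_lift', X.comp_lift', X.comp_lift']
      rw [X.lift_fst_assoc, X.lift_fst_assoc, X.lift_snd_assoc, X.lift_snd_assoc]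
      rw [← X.assoc, X.pad_unzip n, X.lift_fst]
      rw [← X.assoc, X.pad_unzip n, X.lift_snd]
      rw [X.zero_comp_fst, X.zero_comp_snd]
      rw [X.comp_lift', X.comp_lift', X.comp_zero, X.comp_zero]


lemma pd_succ (X : CDC k) {A B : X.Obj} (n : ℕ) (f : X.Hom A B) :
    X.pd (n + 1) f
      = X.comp (X.lift X.fst (X.comp X.snd (X.pad A n))) (X.D (X.pd n f)) := rfl

lemma pd_D (X : CDC k) (A B : X.Obj) : ∀ (n : ℕ) (f : X.Hom A B),
    X.pd n (X.D f) = X.comp (X.unzip A n) (X.D (X.pd n f))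
  | 0, f => (X.id_comp _).symm
  | n + 1, f => by
      rw [X.pd_succ n (X.D f), X.pd_D A B n f, X.CD5, (X.lin_unzip n)]
      rw [← X.assoc, X.comp_lift', X.lift_fst_assoc, X.lift_snd_assoc]
      rw [X.assoc, X.pad_unzip n, X.comp_lift' X.snd]
      rw [show X.comp X.fst (X.unzip A n)
            = X.lift (X.comp X.fst (X.comp (X.unzip A n) X.fst))
                (X.comp X.fst (X.comp (X.unzip A n) X.snd)) by
          conv_lhs => rw [show X.unzip A n
            = X.lift (X.comp (X.unzip A n) X.fst) (X.comp (X.unzip A n) X.snd)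
            from (X.lift_unique _).symm]
          rw [X.comp_lift']]
      rw [X.CD7]
      erw [X.pd_succ n f, X.CD5,
        (X.lin_lift X.lin_fst (X.lin_comp X.lin_snd (X.lin_pad n)) : X.Lin _)]
      show (_ : X.Hom (X.prod (X.pow (X.prod A A) n) (X.prod A A)) B) = _
      conv_rhs => rw [show X.unzip A (n + 1)
            = X.lift (X.lift (X.comp X.fst (X.comp (X.unzip A n) X.fst)) (X.comp X.snd X.fst))
                (X.lift (X.comp X.fst (X.comp (X.unzip A n) X.snd)) (X.comp X.snd X.snd))
            from rfl]
      simp only [comp_comp_lift, comp_lift', assoc, lift_fst_assoc, lift_snd_assoc, lift_fst, lift_snd]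
      refine Eq.trans ?_ (X.assoc (X.lift (X.lift (X.comp X.fst (X.comp (X.unzip A n) X.fst)) (X.comp X.snd X.fst))
          (X.lift (X.comp X.fst (X.comp (X.unzip A n) X.snd)) (X.comp X.snd X.snd)))
        (X.lift (X.comp X.fst (X.lift X.fst (X.comp X.snd (X.pad A n))))
          (X.lift (X.comp X.snd X.fst) (X.comp X.snd (X.comp X.snd (X.pad A n)))))
        (X.D (X.D (X.pd n f))))
      simp only [comp_comp_lift, comp_lift', assoc, lift_fst_assoc, lift_snd_assoc, lift_fst, lift_snd]

end CDC

namespace CDC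
variable {k : Type w} [CommSemiring k]
lemma pd_recover (X : CDC k) {A B : X.Obj} (n : ℕ) (f : X.Hom A B) :
    X.pd (n + 1) f
      = X.comp (X.lift (X.lift X.fst X.zero) (X.lift X.zero X.snd))
          (X.D (X.pd (n + 1) f)) := by
  conv_rhs => rw [X.pd_succ, X.CD5,
    (X.lin_lift X.lin_fst (X.lin_comp X.lin_snd (X.lin_pad n)) : X.Lin _)]
  simp only [comp_comp_lift, comp_lift', assoc, lift_fst_assoc, lift_snd_assoc, lift_fst,
    lift_snd, zero_comp_fst, zero_comp_snd, zero_comp_pad, comp_zero]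
  rw [X.CD6, ← X.pd_succ]

lemma pd_D_zero_iff (X : CDC k) {A B : X.Obj} (n : ℕ) (p : X.Hom A B) :
    X.pd (n + 1) (X.D p) = X.zero ↔ X.pd (n + 1) p = X.zero := by
  constructor
  · intro h
    have hK := X.pd_D A B (n + 1) p
    rw [h] at hK
    have hD : X.D (X.pd (n + 1) p) = X.zero := by
      have := congrArg (X.comp (X.zip A (n + 1))) hK.symm
      rwa [X.comp_zero, ← X.assoc, X.zip_unzip, X.id_comp] at this
    erw [X.pd_recover n p, hD, X.comp_zero]
    rfl
  · intro h
    rw [X.pd_D A B (n + 1) p, h, X.D_zero, X.comp_zero]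
end CDC

/-- If `p : A → B` is a `D`-polynomial then `D[p] : A × A → B` is a
`D`-polynomial with `deg (D[p]) = deg p`. -/
theorem isPoly_D {k : Type w} [CommSemiring k] (X : CDC k)
    {A B : X.Obj} (p : X.Hom A B) (hp : X.IsPoly p) :
    X.IsPoly (X.D p) ∧ X.deg (X.D p) = X.deg p := by
  have key : ∀ n : ℕ, (X.pd (n + 1) (X.D p) = X.zero ↔ X.pd (n + 1) p = X.zero) :=
    fun n => X.pd_D_zero_iff n p
  constructor
  · obtain ⟨n, hn⟩ := hp
    exact ⟨n, (key n).mpr hn⟩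
  · unfold CDC.deg
    congr 1
    ext n
    exact key n
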